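/- For every p, q ∈ ℝᵐ, φ(p+q) − φ(p) − qᵀg(p) = ½ qᵀ A Diag(d) Aᵀ q, where for each j = 1,…,n, d_j = ∫₀¹ ( ∫₀¹ σ((x̂ + Aᵀp + s t Aᵀq)_j) ds ) 2t dt and σ(ξ) = 1 if ξ > 0, σ(ξ) = 0 if ξ ≤ 0. -/

import Mathlib

/-!
The map `ξ ↦ ξ₊` is continuous and has derivative `σ(ξ)` off `0`, and `ξ ↦ ξ₊²` has derivative
`2ξ₊` there; one exceptional point does not obstruct the fundamental theorem of calculus. Hence,
coordinatewise with `u = x̂ + Aᵀp` and `v = Aᵀq`, the inner integral is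
`(∫₀¹ σ(u + s t v) ds) · t v = (u + t v)₊ − u₊`, and integrating `2 v ((u + t v)₊ − u₊)` over `t`
gives `d v² = (u + v)₊² − u₊² − 2 v u₊`. Summing over coordinates is the claimed identity.
-/

open Matrix

/-- `σ(ξ) = 1` if `ξ > 0` and `0` if `ξ ≤ 0`. -/
noncomputable def posSign (ξ : ℝ) : ℝ := if 0 < ξ then 1 else 0

open intervalIntegral MeasureTheory Set

lemma monotone_posSign : Monotone posSign := by
  intro x y hxy
  unfold posSign
  split_ifs with hx hy <;> first | exact absurd (hx.trans_le hxy) hy | norm_num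

lemma hasDerivAt_max_zero_of_ne {ξ : ℝ} (hξ : ξ ≠ 0) :
    HasDerivAt (fun x => max 0 x) (posSign ξ) ξ := by
  rcases hξ.lt_or_gt with hneg | hpos
  · have hzero : (fun x : ℝ => max 0 x) =ᶠ[nhds ξ] fun _ => 0 := by
      filter_upwards [Iio_mem_nhds hneg] with x hx using max_eq_left hx.le
    simpa [posSign, hneg.not_gt] using (hasDerivAt_const ξ (0 : ℝ)).congr_of_eventuallyEq hzero
  · have hid : (fun x : ℝ => max 0 x) =ᶠ[nhds ξ] id := by
      filter_upwards [Ioi_mem_nhds hpos] with x hx using max_eq_right hx.le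
    simpa [posSign, hpos] using (hasDerivAt_id ξ).congr_of_eventuallyEq hid

lemma max_zero_mul_posSign (ξ : ℝ) : max 0 ξ * posSign ξ = max 0 ξ := by
  unfold posSign
  split_ifs with hpos
  · rw [mul_one]
  · rw [max_eq_left (not_lt.mp hpos), zero_mul]

lemma hasDerivAt_max_zero_sq_of_ne {ξ : ℝ} (hξ : ξ ≠ 0) :
    HasDerivAt (fun x => max 0 x ^ 2) (2 * max 0 ξ) ξ := by
  refine ((hasDerivAt_max_zero_of_ne hξ).pow 2).congr_deriv ?_
  rw [mul_assoc, pow_one, max_zero_mul_posSign]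
  norm_num

lemma integral_eq_sub_of_hasDerivAt_of_ne_zero {F F' : ℝ → ℝ} {a b : ℝ} (hF : Continuous F)
    (hderiv : ∀ ξ ≠ 0, HasDerivAt F (F' ξ) ξ) (hint : IntervalIntegrable F' volume a b) :
    ∫ ξ in a..b, F' ξ = F b - F a :=
  integral_eq_of_hasDerivAt_off_countable F F' (countable_singleton 0) hF.continuousOn
    (fun ξ hξ => hderiv ξ hξ.2) hint

lemma integral_posSign (a b : ℝ) : ∫ ξ in a..b, posSign ξ = max 0 b - max 0 a :=
  integral_eq_sub_of_hasDerivAt_of_ne_zero (continuous_const.max continuous_id)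
    (fun _ => hasDerivAt_max_zero_of_ne) (monotone_posSign.intervalIntegrable)

lemma integral_two_mul_max_zero (a b : ℝ) :
    ∫ ξ in a..b, 2 * max 0 ξ = max 0 b ^ 2 - max 0 a ^ 2 :=
  integral_eq_sub_of_hasDerivAt_of_ne_zero ((continuous_const.max continuous_id).pow 2)
    (fun _ => hasDerivAt_max_zero_sq_of_ne)
    ((continuous_const.mul (continuous_const.max continuous_id)).intervalIntegrable a b)

lemma integral_posSign_add_mul_mul (c w : ℝ) :
    (∫ s in (0:ℝ)..1, posSign (c + w * s)) * w = max 0 (c + w) - max 0 c := by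
  rw [mul_comm, ← smul_eq_mul, smul_integral_comp_add_mul, integral_posSign]
  simp

lemma integral_integral_posSign_mul_sq (u v : ℝ) :
    (∫ t in (0:ℝ)..1, (∫ s in (0:ℝ)..1, posSign (u + s * t * v)) * (2 * t)) * v ^ 2
      = max 0 (u + v) ^ 2 - max 0 u ^ 2 - 2 * (v * max 0 u) := by
  have inner (t : ℝ) : (∫ s in (0:ℝ)..1, posSign (u + s * t * v)) * (2 * t) * v ^ 2
      = v * (2 * max 0 (u + v * t)) - 2 * v * max 0 u := by
    have h := integral_posSign_add_mul_mul u (v * t)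
    simp only [show ∀ s, u + s * t * v = u + v * t * s by intro s; ring]
    linear_combination 2 * v * h
  have outer :
      ∫ t in (0:ℝ)..1, v * (2 * max 0 (u + v * t)) = max 0 (u + v) ^ 2 - max 0 u ^ 2 := by
    have hsub := smul_integral_comp_add_mul (a := 0) (b := 1) (fun ξ => 2 * max 0 ξ) v u
    rw [smul_eq_mul, mul_zero, mul_one, add_zero, integral_two_mul_max_zero] at hsub
    rw [intervalIntegral.integral_const_mul, hsub]
  have hcont : Continuous fun t : ℝ => v * (2 * max 0 (u + v * t)) := by fun_prop
  rw [← intervalIntegral.integral_mul_const, integral_congr fun t _ => inner t,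
    integral_sub (hcont.intervalIntegrable 0 1) intervalIntegrable_const, outer,
    intervalIntegral.integral_const]
  simp only [sub_zero, one_smul]
  ring

lemma dotProduct_mul_diagonal_mul_transpose_mulVec {ι κ R : Type*} [Fintype ι] [Fintype κ]
    [DecidableEq κ] [CommSemiring R] (A : Matrix ι κ R) (d : κ → R) (q : ι → R) :
    q ⬝ᵥ (A * diagonal d * Aᵀ) *ᵥ q = ∑ j, d j * (Aᵀ *ᵥ q) j ^ 2 := by
  rw [← mulVec_mulVec, ← mulVec_mulVec, dotProduct_mulVec, ← mulVec_transpose]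
  simp only [dotProduct, mulVec_diagonal]
  exact Finset.sum_congr rfl fun j _ => by ring

/-- Lemma 3: Taylor identity for `φ(p) = ½‖(x̂ + Aᵀp)₊‖² − bᵀp` with
remainder `½ qᵀ A Diag(d) Aᵀ q`. -/
theorem taylor_identity_phi {m n : ℕ} (A : Matrix (Fin m) (Fin n) ℝ)
    (b : Fin m → ℝ) (xhat : Fin n → ℝ)
    (φ : (Fin m → ℝ) → ℝ)
    (hφ : ∀ p, φ p = (1/2) * ∑ j, (max 0 ((xhat + Aᵀ *ᵥ p) j))^2 - b ⬝ᵥ p)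
    (g : (Fin m → ℝ) → (Fin m → ℝ))
    (hg : ∀ p, g p = A *ᵥ (fun j => max 0 ((xhat + Aᵀ *ᵥ p) j)) - b)
    (p q : Fin m → ℝ) (d : Fin n → ℝ)
    (hd : ∀ j, d j = ∫ t in (0:ℝ)..1,
        (∫ s in (0:ℝ)..1, posSign ((xhat + Aᵀ *ᵥ p + (s * t) • (Aᵀ *ᵥ q)) j)) * (2 * t)) :
    φ (p + q) - φ p - q ⬝ᵥ g p
      = (1/2) * (q ⬝ᵥ (A * Matrix.diagonal d * Aᵀ) *ᵥ q) := by
  rw [hφ, hφ, hg, dotProduct_mul_diagonal_mul_transpose_mulVec]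
  set u := xhat + Aᵀ *ᵥ p
  set v := Aᵀ *ᵥ q
  have hshift : xhat + Aᵀ *ᵥ (p + q) = u + v := by rw [mulVec_add, ← add_assoc]
  have hdv (j : Fin n) :
      d j * v j ^ 2 = max 0 (u j + v j) ^ 2 - max 0 (u j) ^ 2 - 2 * (v j * max 0 (u j)) := by
    rw [hd, ← integral_integral_posSign_mul_sq]
    simp only [Pi.add_apply, Pi.smul_apply, smul_eq_mul]
  have hgrad : q ⬝ᵥ A *ᵥ (fun j => max 0 (u j)) = ∑ j, v j * max 0 (u j) := by
    rw [dotProduct_mulVec, ← mulVec_transpose]; rfl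
  rw [hshift, dotProduct_sub, hgrad, dotProduct_add, dotProduct_comm q b]
  simp only [hdv, Pi.add_apply, Finset.sum_sub_distrib, ← Finset.mul_sum]
  ring
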